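/- Let W be a 7-dimensional real vector space with dual basis {v^0,v^1,w^1,v^2,w^2,v^3,w^3} and let φ₀ = (v^1∧w^1 + v^2∧w^2 + v^3∧w^3)∧v^0 + ψ₀, where ψ₀ = -w^{123} + w^1∧v^{23} + w^2∧v^{31} + w^3∧v^{12}. Then for every nonzero vector u ∈ W, the 2-form ι(u)φ₀ has rank 6, i.e., (ι(u)φ₀)^3 ≠ 0 in Λ^6 W*. -/
import Mathlib

noncomputable section

/-- `V = ℝ^6`, presented as pairs `(v-coordinates, w-coordinates)`. -/
abbrev V6 : Type := (Fin 3 → ℝ) × (Fin 3 → ℝ)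

/-- `W = ℝ^7 = ℝ·∂₀ ⊕ ℝ^6`, the first factor carrying the coordinate `v^0`. -/
abbrev W7 : Type := ℝ × V6

/-- The dual coordinate `v^0`. -/
def v0 : Module.Dual ℝ W7 := LinearMap.fst ℝ _ _

/-- The dual coordinates `v^1, v^2, v^3`. -/
def vco (i : Fin 3) : Module.Dual ℝ W7 :=
  ((LinearMap.proj i).comp (LinearMap.fst ℝ _ _)).comp (LinearMap.snd ℝ _ _)

/-- The dual coordinates `w^1, w^2, w^3`. -/
def wco (i : Fin 3) : Module.Dual ℝ W7 :=
  ((LinearMap.proj i).comp (LinearMap.snd ℝ _ _)).comp (LinearMap.snd ℝ _ _)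

open ExteriorAlgebra

/-- `ψ₀ = -w^{123} + w^1∧v^{23} + w^2∧v^{31} + w^3∧v^{12}` (pulled back to `W`). -/
def psi0 : ExteriorAlgebra ℝ (Module.Dual ℝ W7) :=
  -(ι ℝ (wco 0) * ι ℝ (wco 1) * ι ℝ (wco 2))
    + ι ℝ (wco 0) * ι ℝ (vco 1) * ι ℝ (vco 2)
    + ι ℝ (wco 1) * ι ℝ (vco 2) * ι ℝ (vco 0)
    + ι ℝ (wco 2) * ι ℝ (vco 0) * ι ℝ (vco 1)

/-- The standard `G₂` 3-form `φ₀ = (v^1∧w^1 + v^2∧w^2 + v^3∧w^3)∧v^0 + ψ₀`. -/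
def phi0 : ExteriorAlgebra ℝ (Module.Dual ℝ W7) :=
  (ι ℝ (vco 0) * ι ℝ (wco 0) + ι ℝ (vco 1) * ι ℝ (wco 1) + ι ℝ (vco 2) * ι ℝ (wco 2)) * ι ℝ v0
    + psi0

/-- Interior product `ι(u)` with a vector `u : W`, i.e. left contraction. -/
def intProd (u : W7) (φ : ExteriorAlgebra ℝ (Module.Dual ℝ W7)) :
    ExteriorAlgebra ℝ (Module.Dual ℝ W7) :=
  CliffordAlgebra.contractLeft (Module.Dual.eval ℝ W7 u) φ

namespace Stmt1Aux

abbrev EA := ExteriorAlgebra ℝ (Module.Dual ℝ W7)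

lemma swap_pair (f g : Module.Dual ℝ W7) : ι ℝ f * ι ℝ g = -(ι ℝ g * ι ℝ f) :=
  eq_neg_of_add_eq_zero_left (ι_add_mul_swap f g)

lemma swap_chain (f g : Module.Dual ℝ W7) (y : EA) :
    ι ℝ f * (ι ℝ g * y) = -(ι ℝ g * (ι ℝ f * y)) := by
  rw [← mul_assoc, swap_pair, neg_mul, mul_assoc]

lemma zero_chain (f : Module.Dual ℝ W7) (y : EA) : ι ℝ f * (ι ℝ f * y) = 0 := by
  rw [← mul_assoc, ι_sq_zero, zero_mul]

@[simp] lemma ev_v0 (x : W7) : Module.Dual.eval ℝ W7 x v0 = x.1 := rfl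
@[simp] lemma ev_v (x : W7) (i : Fin 3) : Module.Dual.eval ℝ W7 x (vco i) = x.2.1 i := rfl
@[simp] lemma ev_w (x : W7) (i : Fin 3) : Module.Dual.eval ℝ W7 x (wco i) = x.2.2 i := rfl



set_option maxHeartbeats 2000000 in
set_option maxHeartbeats 4000000 in
lemma hbeta (u : W7) : intProd u phi0 =
      (u.2.2 0) • (ι ℝ v0 * (ι ℝ (vco 0)))
      + (((-1:ℝ)) * u.2.1 0) • (ι ℝ v0 * (ι ℝ (wco 0)))
      + (u.2.2 1) • (ι ℝ v0 * (ι ℝ (vco 1)))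
      + (((-1:ℝ)) * u.2.1 1) • (ι ℝ v0 * (ι ℝ (wco 1)))
      + (u.2.2 2) • (ι ℝ v0 * (ι ℝ (vco 2)))
      + (((-1:ℝ)) * u.2.1 2) • (ι ℝ v0 * (ι ℝ (wco 2)))
      + (u.1) • (ι ℝ (vco 0) * (ι ℝ (wco 0)))
      + (u.2.2 2) • (ι ℝ (vco 0) * (ι ℝ (vco 1)))
      + (u.2.1 2) • (ι ℝ (vco 0) * (ι ℝ (wco 1)))
      + (((-1:ℝ)) * u.2.2 1) • (ι ℝ (vco 0) * (ι ℝ (vco 2)))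
      + (((-1:ℝ)) * u.2.1 1) • (ι ℝ (vco 0) * (ι ℝ (wco 2)))
      + (u.2.1 2) • (ι ℝ (wco 0) * (ι ℝ (vco 1)))
      + (((-1:ℝ)) * u.2.2 2) • (ι ℝ (wco 0) * (ι ℝ (wco 1)))
      + (((-1:ℝ)) * u.2.1 1) • (ι ℝ (wco 0) * (ι ℝ (vco 2)))
      + (u.2.2 1) • (ι ℝ (wco 0) * (ι ℝ (wco 2)))
      + (u.1) • (ι ℝ (vco 1) * (ι ℝ (wco 1)))
      + (u.2.2 0) • (ι ℝ (vco 1) * (ι ℝ (vco 2)))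
      + (u.2.1 0) • (ι ℝ (vco 1) * (ι ℝ (wco 2)))
      + (u.2.1 0) • (ι ℝ (wco 1) * (ι ℝ (vco 2)))
      + (((-1:ℝ)) * u.2.2 0) • (ι ℝ (wco 1) * (ι ℝ (wco 2)))
      + (u.1) • (ι ℝ (vco 2) * (ι ℝ (wco 2))) := by
  simp only [intProd, phi0, psi0, mul_assoc, map_add, map_neg, map_sub,
    CliffordAlgebra.contractLeft_ι_mul, CliffordAlgebra.contractLeft_ι,
    ev_v0, ev_v, ev_w, Algebra.algebraMap_eq_smul_one, mul_one, one_mul,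
    mul_assoc, add_mul, mul_add, sub_mul, mul_sub, neg_mul, mul_neg, smul_mul_assoc, mul_smul_comm, smul_smul, smul_neg, neg_neg, smul_add, smul_sub, mul_zero, zero_mul, smul_zero, zero_smul, add_zero, zero_add, neg_zero, swap_pair (vco 0) v0, swap_chain (vco 0) v0, swap_pair (wco 0) v0, swap_chain (wco 0) v0, swap_pair (wco 0) (vco 0), swap_chain (wco 0) (vco 0), swap_pair (vco 1) v0, swap_chain (vco 1) v0, swap_pair (vco 1) (vco 0), swap_chain (vco 1) (vco 0), swap_pair (vco 1) (wco 0), swap_chain (vco 1) (wco 0), swap_pair (wco 1) v0, swap_chain (wco 1) v0, swap_pair (wco 1) (vco 0), swap_chain (wco 1) (vco 0), swap_pair (wco 1) (wco 0), swap_chain (wco 1) (wco 0), swap_pair (wco 1) (vco 1), swap_chain (wco 1) (vco 1), swap_pair (vco 2) v0, swap_chain (vco 2) v0, swap_pair (vco 2) (vco 0), swap_chain (vco 2) (vco 0), swap_pair (vco 2) (wco 0), swap_chain (vco 2) (wco 0), swap_pair (vco 2) (vco 1), swap_chain (vco 2) (vco 1), swap_pair (vco 2) (wco 1), swap_chain (vco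 2) (wco 1), swap_pair (wco 2) v0, swap_chain (wco 2) v0, swap_pair (wco 2) (vco 0), swap_chain (wco 2) (vco 0), swap_pair (wco 2) (wco 0), swap_chain (wco 2) (wco 0), swap_pair (wco 2) (vco 1), swap_chain (wco 2) (vco 1), swap_pair (wco 2) (wco 1), swap_chain (wco 2) (wco 1), swap_pair (wco 2) (vco 2), swap_chain (wco 2) (vco 2), ExteriorAlgebra.ι_sq_zero v0, zero_chain v0, ExteriorAlgebra.ι_sq_zero (vco 0), zero_chain (vco 0), ExteriorAlgebra.ι_sq_zero (wco 0), zero_chain (wco 0), ExteriorAlgebra.ι_sq_zero (vco 1), zero_chain (vco 1), ExteriorAlgebra.ι_sq_zero (wco 1), zero_chain (wco 1), ExteriorAlgebra.ι_sq_zero (vco 2), zero_chain (vco 2), ExteriorAlgebra.ι_sq_zero (wco 2), zero_chain (wco 2), sub_eq_add_neg]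
  module

set_option maxHeartbeats 4000000 in
lemma hbeta2 (u : W7) : intProd u phi0 * intProd u phi0 =
      ((2:ℝ) * u.2.1 2 * u.2.2 0 + (2:ℝ) * u.2.1 0 * u.2.2 2 + (2:ℝ) * u.1 * u.2.2 1) • (ι ℝ v0 * (ι ℝ (vco 0) * (ι ℝ (wco 0) * (ι ℝ (vco 1)))))
      + (((-2:ℝ)) * u.2.2 0 * u.2.2 2 + (2:ℝ) * u.2.1 0 * u.2.1 2 + ((-2:ℝ)) * u.1 * u.2.1 1) • (ι ℝ v0 * (ι ℝ (vco 0) * (ι ℝ (wco 0) * (ι ℝ (wco 1)))))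
      + (((-2:ℝ)) * u.2.1 1 * u.2.2 0 + ((-2:ℝ)) * u.2.1 0 * u.2.2 1 + (2:ℝ) * u.1 * u.2.2 2) • (ι ℝ v0 * (ι ℝ (vco 0) * (ι ℝ (wco 0) * (ι ℝ (vco 2)))))
      + ((2:ℝ) * u.2.2 0 * u.2.2 1 + ((-2:ℝ)) * u.2.1 0 * u.2.1 1 + ((-2:ℝ)) * u.1 * u.2.1 2) • (ι ℝ v0 * (ι ℝ (vco 0) * (ι ℝ (wco 0) * (ι ℝ (wco 2)))))
      + (((-2:ℝ)) * u.2.1 2 * u.2.2 1 + ((-2:ℝ)) * u.2.1 1 * u.2.2 2 + (2:ℝ) * u.1 * u.2.2 0) • (ι ℝ v0 * (ι ℝ (vco 0) * (ι ℝ (vco 1) * (ι ℝ (wco 1)))))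
      + ((2:ℝ) * u.2.2 2^2 + (2:ℝ) * u.2.2 1^2 + (2:ℝ) * u.2.2 0^2) • (ι ℝ v0 * (ι ℝ (vco 0) * (ι ℝ (vco 1) * (ι ℝ (vco 2)))))
      + (((-2:ℝ)) * u.2.1 2 * u.2.2 2 + (2:ℝ) * u.2.1 1 * u.2.2 1 + (2:ℝ) * u.2.1 0 * u.2.2 0) • (ι ℝ v0 * (ι ℝ (vco 0) * (ι ℝ (vco 1) * (ι ℝ (wco 2)))))
      + ((2:ℝ) * u.2.1 2 * u.2.2 2 + ((-2:ℝ)) * u.2.1 1 * u.2.2 1 + (2:ℝ) * u.2.1 0 * u.2.2 0) • (ι ℝ v0 * (ι ℝ (vco 0) * (ι ℝ (wco 1) * (ι ℝ (vco 2)))))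
      + (((-2:ℝ)) * u.2.2 0^2 + ((-2:ℝ)) * u.2.1 2^2 + ((-2:ℝ)) * u.2.1 1^2) • (ι ℝ v0 * (ι ℝ (vco 0) * (ι ℝ (wco 1) * (ι ℝ (wco 2)))))
      + ((2:ℝ) * u.2.1 2 * u.2.2 1 + (2:ℝ) * u.2.1 1 * u.2.2 2 + (2:ℝ) * u.1 * u.2.2 0) • (ι ℝ v0 * (ι ℝ (vco 0) * (ι ℝ (vco 2) * (ι ℝ (wco 2)))))
      + ((2:ℝ) * u.2.2 1 * u.2.2 2 + ((-2:ℝ)) * u.2.1 1 * u.2.1 2 + ((-2:ℝ)) * u.1 * u.2.1 0) • (ι ℝ v0 * (ι ℝ (wco 0) * (ι ℝ (vco 1) * (ι ℝ (wco 1)))))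
      + ((2:ℝ) * u.2.1 2 * u.2.2 2 + (2:ℝ) * u.2.1 1 * u.2.2 1 + ((-2:ℝ)) * u.2.1 0 * u.2.2 0) • (ι ℝ v0 * (ι ℝ (wco 0) * (ι ℝ (vco 1) * (ι ℝ (vco 2)))))
      + (((-2:ℝ)) * u.2.2 1^2 + ((-2:ℝ)) * u.2.1 2^2 + ((-2:ℝ)) * u.2.1 0^2) • (ι ℝ v0 * (ι ℝ (wco 0) * (ι ℝ (vco 1) * (ι ℝ (wco 2)))))
      + (((-2:ℝ)) * u.2.2 2^2 + ((-2:ℝ)) * u.2.1 1^2 + ((-2:ℝ)) * u.2.1 0^2) • (ι ℝ v0 * (ι ℝ (wco 0) * (ι ℝ (wco 1) * (ι ℝ (vco 2)))))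
      + ((2:ℝ) * u.2.1 2 * u.2.2 2 + (2:ℝ) * u.2.1 1 * u.2.2 1 + (2:ℝ) * u.2.1 0 * u.2.2 0) • (ι ℝ v0 * (ι ℝ (wco 0) * (ι ℝ (wco 1) * (ι ℝ (wco 2)))))
      + (((-2:ℝ)) * u.2.2 1 * u.2.2 2 + (2:ℝ) * u.2.1 1 * u.2.1 2 + ((-2:ℝ)) * u.1 * u.2.1 0) • (ι ℝ v0 * (ι ℝ (wco 0) * (ι ℝ (vco 2) * (ι ℝ (wco 2)))))
      + ((2:ℝ) * u.2.1 1 * u.2.2 0 + (2:ℝ) * u.2.1 0 * u.2.2 1 + (2:ℝ) * u.1 * u.2.2 2) • (ι ℝ v0 * (ι ℝ (vco 1) * (ι ℝ (wco 1) * (ι ℝ (vco 2)))))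
      + (((-2:ℝ)) * u.2.2 0 * u.2.2 1 + (2:ℝ) * u.2.1 0 * u.2.1 1 + ((-2:ℝ)) * u.1 * u.2.1 2) • (ι ℝ v0 * (ι ℝ (vco 1) * (ι ℝ (wco 1) * (ι ℝ (wco 2)))))
      + (((-2:ℝ)) * u.2.1 2 * u.2.2 0 + ((-2:ℝ)) * u.2.1 0 * u.2.2 2 + (2:ℝ) * u.1 * u.2.2 1) • (ι ℝ v0 * (ι ℝ (vco 1) * (ι ℝ (vco 2) * (ι ℝ (wco 2)))))
      + ((2:ℝ) * u.2.2 0 * u.2.2 2 + ((-2:ℝ)) * u.2.1 0 * u.2.1 2 + ((-2:ℝ)) * u.1 * u.2.1 1) • (ι ℝ v0 * (ι ℝ (wco 1) * (ι ℝ (vco 2) * (ι ℝ (wco 2)))))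
      + ((2:ℝ) * u.2.2 2^2 + (2:ℝ) * u.2.1 2^2 + (2:ℝ) * u.1^2) • (ι ℝ (vco 0) * (ι ℝ (wco 0) * (ι ℝ (vco 1) * (ι ℝ (wco 1)))))
      + (((-2:ℝ)) * u.2.1 2 * u.2.2 1 + (2:ℝ) * u.2.1 1 * u.2.2 2 + (2:ℝ) * u.1 * u.2.2 0) • (ι ℝ (vco 0) * (ι ℝ (wco 0) * (ι ℝ (vco 1) * (ι ℝ (vco 2)))))
      + (((-2:ℝ)) * u.2.2 1 * u.2.2 2 + ((-2:ℝ)) * u.2.1 1 * u.2.1 2 + (2:ℝ) * u.1 * u.2.1 0) • (ι ℝ (vco 0) * (ι ℝ (wco 0) * (ι ℝ (vco 1) * (ι ℝ (wco 2)))))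
      + ((2:ℝ) * u.2.2 1 * u.2.2 2 + (2:ℝ) * u.2.1 1 * u.2.1 2 + (2:ℝ) * u.1 * u.2.1 0) • (ι ℝ (vco 0) * (ι ℝ (wco 0) * (ι ℝ (wco 1) * (ι ℝ (vco 2)))))
      + (((-2:ℝ)) * u.2.1 2 * u.2.2 1 + (2:ℝ) * u.2.1 1 * u.2.2 2 + ((-2:ℝ)) * u.1 * u.2.2 0) • (ι ℝ (vco 0) * (ι ℝ (wco 0) * (ι ℝ (wco 1) * (ι ℝ (wco 2)))))
      + ((2:ℝ) * u.2.2 1^2 + (2:ℝ) * u.2.1 1^2 + (2:ℝ) * u.1^2) • (ι ℝ (vco 0) * (ι ℝ (wco 0) * (ι ℝ (vco 2) * (ι ℝ (wco 2)))))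
      + (((-2:ℝ)) * u.2.1 2 * u.2.2 0 + (2:ℝ) * u.2.1 0 * u.2.2 2 + ((-2:ℝ)) * u.1 * u.2.2 1) • (ι ℝ (vco 0) * (ι ℝ (vco 1) * (ι ℝ (wco 1) * (ι ℝ (vco 2)))))
      + (((-2:ℝ)) * u.2.2 0 * u.2.2 2 + ((-2:ℝ)) * u.2.1 0 * u.2.1 2 + ((-2:ℝ)) * u.1 * u.2.1 1) • (ι ℝ (vco 0) * (ι ℝ (vco 1) * (ι ℝ (wco 1) * (ι ℝ (wco 2)))))
      + (((-2:ℝ)) * u.2.1 1 * u.2.2 0 + (2:ℝ) * u.2.1 0 * u.2.2 1 + (2:ℝ) * u.1 * u.2.2 2) • (ι ℝ (vco 0) * (ι ℝ (vco 1) * (ι ℝ (vco 2) * (ι ℝ (wco 2)))))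
      + (((-2:ℝ)) * u.2.2 0 * u.2.2 1 + ((-2:ℝ)) * u.2.1 0 * u.2.1 1 + (2:ℝ) * u.1 * u.2.1 2) • (ι ℝ (vco 0) * (ι ℝ (wco 1) * (ι ℝ (vco 2) * (ι ℝ (wco 2)))))
      + ((2:ℝ) * u.2.2 0 * u.2.2 2 + (2:ℝ) * u.2.1 0 * u.2.1 2 + ((-2:ℝ)) * u.1 * u.2.1 1) • (ι ℝ (wco 0) * (ι ℝ (vco 1) * (ι ℝ (wco 1) * (ι ℝ (vco 2)))))
      + (((-2:ℝ)) * u.2.1 2 * u.2.2 0 + (2:ℝ) * u.2.1 0 * u.2.2 2 + (2:ℝ) * u.1 * u.2.2 1) • (ι ℝ (wco 0) * (ι ℝ (vco 1) * (ι ℝ (wco 1) * (ι ℝ (wco 2)))))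
      + ((2:ℝ) * u.2.2 0 * u.2.2 1 + (2:ℝ) * u.2.1 0 * u.2.1 1 + (2:ℝ) * u.1 * u.2.1 2) • (ι ℝ (wco 0) * (ι ℝ (vco 1) * (ι ℝ (vco 2) * (ι ℝ (wco 2)))))
      + (((-2:ℝ)) * u.2.1 1 * u.2.2 0 + (2:ℝ) * u.2.1 0 * u.2.2 1 + ((-2:ℝ)) * u.1 * u.2.2 2) • (ι ℝ (wco 0) * (ι ℝ (wco 1) * (ι ℝ (vco 2) * (ι ℝ (wco 2)))))
      + ((2:ℝ) * u.2.2 0^2 + (2:ℝ) * u.2.1 0^2 + (2:ℝ) * u.1^2) • (ι ℝ (vco 1) * (ι ℝ (wco 1) * (ι ℝ (vco 2) * (ι ℝ (wco 2))))) := by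
  rw [hbeta]
  simp only [mul_assoc, add_mul, mul_add, sub_mul, mul_sub, neg_mul, mul_neg, smul_mul_assoc, mul_smul_comm, smul_smul, smul_neg, neg_neg, smul_add, smul_sub, mul_zero, zero_mul, smul_zero, zero_smul, add_zero, zero_add, neg_zero, swap_pair (vco 0) v0, swap_chain (vco 0) v0, swap_pair (wco 0) v0, swap_chain (wco 0) v0, swap_pair (wco 0) (vco 0), swap_chain (wco 0) (vco 0), swap_pair (vco 1) v0, swap_chain (vco 1) v0, swap_pair (vco 1) (vco 0), swap_chain (vco 1) (vco 0), swap_pair (vco 1) (wco 0), swap_chain (vco 1) (wco 0), swap_pair (wco 1) v0, swap_chain (wco 1) v0, swap_pair (wco 1) (vco 0), swap_chain (wco 1) (vco 0), swap_pair (wco 1) (wco 0), swap_chain (wco 1) (wco 0), swap_pair (wco 1) (vco 1), swap_chain (wco 1) (vco 1), swap_pair (vco 2) v0, swap_chain (vco 2) v0, swap_pair (vco 2) (vco 0), swap_chain (vco 2) (vco 0), swap_pair (vco 2) (wco 0), swap_chain (vco 2) (wco 0), swap_pair (vco 2) (vco 1), swap_chain (vco 2) (vco 1), swap_pair (vco 2)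 (wco 1), swap_chain (vco 2) (wco 1), swap_pair (wco 2) v0, swap_chain (wco 2) v0, swap_pair (wco 2) (vco 0), swap_chain (wco 2) (vco 0), swap_pair (wco 2) (wco 0), swap_chain (wco 2) (wco 0), swap_pair (wco 2) (vco 1), swap_chain (wco 2) (vco 1), swap_pair (wco 2) (wco 1), swap_chain (wco 2) (wco 1), swap_pair (wco 2) (vco 2), swap_chain (wco 2) (vco 2), ExteriorAlgebra.ι_sq_zero v0, zero_chain v0, ExteriorAlgebra.ι_sq_zero (vco 0), zero_chain (vco 0), ExteriorAlgebra.ι_sq_zero (wco 0), zero_chain (wco 0), ExteriorAlgebra.ι_sq_zero (vco 1), zero_chain (vco 1), ExteriorAlgebra.ι_sq_zero (wco 1), zero_chain (wco 1), ExteriorAlgebra.ι_sq_zero (vco 2), zero_chain (vco 2), ExteriorAlgebra.ι_sq_zero (wco 2), zero_chain (wco 2)]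
  module

set_option maxHeartbeats 4000000 in
lemma hbeta3 (u : W7) : intProd u phi0 * intProd u phi0 * intProd u phi0 =
      ((6:ℝ) * u.2.2 2^3 + (6:ℝ) * u.2.2 1^2 * u.2.2 2 + (6:ℝ) * u.2.2 0^2 * u.2.2 2 + (6:ℝ) * u.2.1 2^2 * u.2.2 2 + (6:ℝ) * u.2.1 1^2 * u.2.2 2 + (6:ℝ) * u.2.1 0^2 * u.2.2 2 + (6:ℝ) * u.1^2 * u.2.2 2) • (ι ℝ v0 * (ι ℝ (vco 0) * (ι ℝ (wco 0) * (ι ℝ (vco 1) * (ι ℝ (wco 1) * (ι ℝ (vco 2)))))))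
      + (((-6:ℝ)) * u.2.1 2 * u.2.2 2^2 + ((-6:ℝ)) * u.2.1 2 * u.2.2 1^2 + ((-6:ℝ)) * u.2.1 2 * u.2.2 0^2 + ((-6:ℝ)) * u.2.1 2^3 + ((-6:ℝ)) * u.2.1 1^2 * u.2.1 2 + ((-6:ℝ)) * u.2.1 0^2 * u.2.1 2 + ((-6:ℝ)) * u.1^2 * u.2.1 2) • (ι ℝ v0 * (ι ℝ (vco 0) * (ι ℝ (wco 0) * (ι ℝ (vco 1) * (ι ℝ (wco 1) * (ι ℝ (wco 2)))))))
      + ((6:ℝ) * u.2.2 1 * u.2.2 2^2 + (6:ℝ) * u.2.2 1^3 + (6:ℝ) * u.2.2 0^2 * u.2.2 1 + (6:ℝ) * u.2.1 2^2 * u.2.2 1 + (6:ℝ) * u.2.1 1^2 * u.2.2 1 + (6:ℝ) * u.2.1 0^2 * u.2.2 1 + (6:ℝ) * u.1^2 * u.2.2 1) • (ι ℝ v0 * (ι ℝ (vco 0) * (ι ℝ (wco 0) * (ι ℝ (vco 1) * (ι ℝ (vco 2) * (ι ℝ (wco 2)))))))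
      + (((-6:ℝ)) * u.2.1 1 * u.2.2 2^2 + ((-6:ℝ)) * u.2.1 1 * u.2.2 1^2 + ((-6:ℝ)) * u.2.1 1 * u.2.2 0^2 + ((-6:ℝ)) * u.2.1 1 * u.2.1 2^2 + ((-6:ℝ)) * u.2.1 1^3 + ((-6:ℝ)) * u.2.1 0^2 * u.2.1 1 + ((-6:ℝ)) * u.1^2 * u.2.1 1) • (ι ℝ v0 * (ι ℝ (vco 0) * (ι ℝ (wco 0) * (ι ℝ (wco 1) * (ι ℝ (vco 2) * (ι ℝ (wco 2)))))))
      + ((6:ℝ) * u.2.2 0 * u.2.2 2^2 + (6:ℝ) * u.2.2 0 * u.2.2 1^2 + (6:ℝ) * u.2.2 0^3 + (6:ℝ) * u.2.1 2^2 * u.2.2 0 + (6:ℝ) * u.2.1 1^2 * u.2.2 0 + (6:ℝ) * u.2.1 0^2 * u.2.2 0 + (6:ℝ) * u.1^2 * u.2.2 0) • (ι ℝ v0 * (ι ℝ (vco 0) * (ι ℝ (vco 1) * (ι ℝ (wco 1) * (ι ℝ (vco 2) * (ι ℝ (wco 2)))))))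
      + (((-6:ℝ)) * u.2.1 0 * u.2.2 2^2 + ((-6:ℝ)) * u.2.1 0 * u.2.2 1^2 + ((-6:ℝ)) * u.2.1 0 * u.2.2 0^2 + ((-6:ℝ)) * u.2.1 0 * u.2.1 2^2 + ((-6:ℝ)) * u.2.1 0 * u.2.1 1^2 + ((-6:ℝ)) * u.2.1 0^3 + ((-6:ℝ)) * u.1^2 * u.2.1 0) • (ι ℝ v0 * (ι ℝ (wco 0) * (ι ℝ (vco 1) * (ι ℝ (wco 1) * (ι ℝ (vco 2) * (ι ℝ (wco 2)))))))
      + ((6:ℝ) * u.1 * u.2.2 2^2 + (6:ℝ) * u.1 * u.2.2 1^2 + (6:ℝ) * u.1 * u.2.2 0^2 + (6:ℝ) * u.1 * u.2.1 2^2 + (6:ℝ) * u.1 * u.2.1 1^2 + (6:ℝ) * u.1 * u.2.1 0^2 + (6:ℝ) * u.1^3) • (ι ℝ (vco 0) * (ι ℝ (wco 0) * (ι ℝ (vco 1) * (ι ℝ (wco 1) * (ι ℝ (vco 2) * (ι ℝ (wco 2))))))) := by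
  rw [hbeta2, hbeta]
  simp only [mul_assoc, add_mul, mul_add, sub_mul, mul_sub, neg_mul, mul_neg, smul_mul_assoc, mul_smul_comm, smul_smul, smul_neg, neg_neg, smul_add, smul_sub, mul_zero, zero_mul, smul_zero, zero_smul, add_zero, zero_add, neg_zero, swap_pair (vco 0) v0, swap_chain (vco 0) v0, swap_pair (wco 0) v0, swap_chain (wco 0) v0, swap_pair (wco 0) (vco 0), swap_chain (wco 0) (vco 0), swap_pair (vco 1) v0, swap_chain (vco 1) v0, swap_pair (vco 1) (vco 0), swap_chain (vco 1) (vco 0), swap_pair (vco 1) (wco 0), swap_chain (vco 1) (wco 0), swap_pair (wco 1) v0, swap_chain (wco 1) v0, swap_pair (wco 1) (vco 0), swap_chain (wco 1) (vco 0), swap_pair (wco 1) (wco 0), swap_chain (wco 1) (wco 0), swap_pair (wco 1) (vco 1), swap_chain (wco 1) (vco 1), swap_pair (vco 2) v0, swap_chain (vco 2) v0, swap_pair (vco 2) (vco 0), swap_chain (vco 2) (vco 0), swap_pair (vco 2) (wco 0), swap_chain (vco 2) (wco 0), swap_pair (vco 2) (vco 1), swap_chain (vco 2) (vco 1), swap_pair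 (vco 2) (wco 1), swap_chain (vco 2) (wco 1), swap_pair (wco 2) v0, swap_chain (wco 2) v0, swap_pair (wco 2) (vco 0), swap_chain (wco 2) (vco 0), swap_pair (wco 2) (wco 0), swap_chain (wco 2) (wco 0), swap_pair (wco 2) (vco 1), swap_chain (wco 2) (vco 1), swap_pair (wco 2) (wco 1), swap_chain (wco 2) (wco 1), swap_pair (wco 2) (vco 2), swap_chain (wco 2) (vco 2), ExteriorAlgebra.ι_sq_zero v0, zero_chain v0, ExteriorAlgebra.ι_sq_zero (vco 0), zero_chain (vco 0), ExteriorAlgebra.ι_sq_zero (wco 0), zero_chain (wco 0), ExteriorAlgebra.ι_sq_zero (vco 1), zero_chain (vco 1), ExteriorAlgebra.ι_sq_zero (wco 1), zero_chain (wco 1), ExteriorAlgebra.ι_sq_zero (vco 2), zero_chain (vco 2), ExteriorAlgebra.ι_sq_zero (wco 2), zero_chain (wco 2)]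
  module

/-- the metric-dual covector of `u` -/
def lamu (u : W7) : Module.Dual ℝ W7 :=
  u.1 • v0 + u.2.1 0 • vco 0 + u.2.1 1 • vco 1 + u.2.1 2 • vco 2
    + u.2.2 0 • wco 0 + u.2.2 1 • wco 1 + u.2.2 2 • wco 2

/-- the volume monomial -/
def Om : EA := ι ℝ v0 * (ι ℝ (vco 0) * (ι ℝ (wco 0) * (ι ℝ (vco 1) * (ι ℝ (wco 1) * (ι ℝ (vco 2) * (ι ℝ (wco 2)))))))

lemma hq (u : W7) (hu : u ≠ 0) : (0:ℝ) < u.1^2 + u.2.1 0^2 + u.2.1 1^2 + u.2.1 2^2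
    + u.2.2 0^2 + u.2.2 1^2 + u.2.2 2^2 := by
  rcases lt_or_ge (0:ℝ) (u.1^2 + u.2.1 0^2 + u.2.1 1^2 + u.2.1 2^2
      + u.2.2 0^2 + u.2.2 1^2 + u.2.2 2^2) with h|h
  · exact h
  · exfalso
    apply hu
    have h1 : u.1 = 0 := by nlinarith [sq_nonneg u.1, sq_nonneg (u.2.1 0), sq_nonneg (u.2.1 1), sq_nonneg (u.2.1 2), sq_nonneg (u.2.2 0), sq_nonneg (u.2.2 1), sq_nonneg (u.2.2 2)]
    have h2 : u.2.1 0 = 0 := by nlinarith [sq_nonneg u.1, sq_nonneg (u.2.1 0), sq_nonneg (u.2.1 1), sq_nonneg (u.2.1 2), sq_nonneg (u.2.2 0), sq_nonneg (u.2.2 1), sq_nonneg (u.2.2 2)]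
    have h3 : u.2.1 1 = 0 := by nlinarith [sq_nonneg u.1, sq_nonneg (u.2.1 0), sq_nonneg (u.2.1 1), sq_nonneg (u.2.1 2), sq_nonneg (u.2.2 0), sq_nonneg (u.2.2 1), sq_nonneg (u.2.2 2)]
    have h4 : u.2.1 2 = 0 := by nlinarith [sq_nonneg u.1, sq_nonneg (u.2.1 0), sq_nonneg (u.2.1 1), sq_nonneg (u.2.1 2), sq_nonneg (u.2.2 0), sq_nonneg (u.2.2 1), sq_nonneg (u.2.2 2)]
    have h5 : u.2.2 0 = 0 := by nlinarith [sq_nonneg u.1, sq_nonneg (u.2.1 0), sq_nonneg (u.2.1 1), sq_nonneg (u.2.1 2), sq_nonneg (u.2.2 0), sq_nonneg (u.2.2 1), sq_nonneg (u.2.2 2)]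
    have h6 : u.2.2 1 = 0 := by nlinarith [sq_nonneg u.1, sq_nonneg (u.2.1 0), sq_nonneg (u.2.1 1), sq_nonneg (u.2.1 2), sq_nonneg (u.2.2 0), sq_nonneg (u.2.2 1), sq_nonneg (u.2.2 2)]
    have h7 : u.2.2 2 = 0 := by nlinarith [sq_nonneg u.1, sq_nonneg (u.2.1 0), sq_nonneg (u.2.1 1), sq_nonneg (u.2.1 2), sq_nonneg (u.2.2 0), sq_nonneg (u.2.2 1), sq_nonneg (u.2.2 2)]
    refine Prod.ext h1 (Prod.ext (funext fun i => ?_) (funext fun i => ?_)) <;>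
      fin_cases i <;>
      simp only [Prod.fst_zero, Prod.snd_zero, Pi.zero_apply] <;>
      assumption

set_option maxHeartbeats 4000000 in
lemma hbeta4 (u : W7) :
    intProd u phi0 * intProd u phi0 * intProd u phi0 * ι ℝ (lamu u) =
      (6 * (u.1^2 + u.2.1 0^2 + u.2.1 1^2 + u.2.1 2^2
        + u.2.2 0^2 + u.2.2 1^2 + u.2.2 2^2)^2) • Om := by
  rw [hbeta3]
  simp only [lamu, Om, map_add, map_smul, mul_assoc, add_mul, mul_add, sub_mul, mul_sub, neg_mul, mul_neg, smul_mul_assoc, mul_smul_comm, smul_smul, smul_neg, neg_neg, smul_add, smul_sub, mul_zero, zero_mul, smul_zero, zero_smul, add_zero, zero_add, neg_zero, swap_pair (vco 0) v0, swap_chain (vco 0) v0, swap_pair (wco 0) v0, swap_chain (wco 0) v0, swap_pair (wco 0) (vco 0), swap_chain (wco 0) (vco 0), swap_pair (vco 1) v0, swap_chain (vco 1) v0, swap_pair (vco 1) (vco 0), swap_chain (vco 1) (vco 0), swap_pair (vco 1) (wco 0), swap_chain (vco 1) (wco 0), swap_pair (wco 1) v0, swap_chain (wco 1) v0, swap_pair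 (wco 1) (vco 0), swap_chain (wco 1) (vco 0), swap_pair (wco 1) (wco 0), swap_chain (wco 1) (wco 0), swap_pair (wco 1) (vco 1), swap_chain (wco 1) (vco 1), swap_pair (vco 2) v0, swap_chain (vco 2) v0, swap_pair (vco 2) (vco 0), swap_chain (vco 2) (vco 0), swap_pair (vco 2) (wco 0), swap_chain (vco 2) (wco 0), swap_pair (vco 2) (vco 1), swap_chain (vco 2) (vco 1), swap_pair (vco 2) (wco 1), swap_chain (vco 2) (wco 1), swap_pair (wco 2) v0, swap_chain (wco 2) v0, swap_pair (wco 2) (vco 0), swap_chain (wco 2) (vco 0), swap_pair (wco 2) (wco 0), swap_chain (wco 2) (wco 0), swap_pair (wco 2) (vco 1), swap_chain (wco 2) (vco 1), swap_pair (wco 2) (wco 1), swap_chain (wco 2) (wco 1), swap_pair (wco 2) (vco 2), swap_chain (wco 2) (vco 2), ExteriorAlgebra.ι_sq_zero v0, zero_chain v0, ExteriorAlgebra.ι_sq_zero (vco 0), zero_chain (vco 0), ExteriorAlgebra.ι_sq_zero (wco 0), zero_chain (wco 0), ExteriorAlgebra.ι_sq_zero (vco 1), zero_chain (vco 1), ExteriorAlgebra.ι_sq_zero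 (wco 1), zero_chain (wco 1), ExteriorAlgebra.ι_sq_zero (vco 2), zero_chain (vco 2), ExteriorAlgebra.ι_sq_zero (wco 2), zero_chain (wco 2)]
  module

def e0 : W7 := (1, 0)
def eV (i : Fin 3) : W7 := (0, (fun j => if j = i then 1 else 0, 0))
def eW (i : Fin 3) : W7 := (0, (0, fun j => if j = i then 1 else 0))

lemma ev_e0_vz : Module.Dual.eval ℝ W7 (e0) (v0) = (1:ℝ) := rfl
lemma ev_e0_v0 : Module.Dual.eval ℝ W7 (e0) (vco 0) = (0:ℝ) := rfl
lemma ev_e0_v1 : Module.Dual.eval ℝ W7 (e0) (vco 1) = (0:ℝ) := rfl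
lemma ev_e0_v2 : Module.Dual.eval ℝ W7 (e0) (vco 2) = (0:ℝ) := rfl
lemma ev_e0_w0 : Module.Dual.eval ℝ W7 (e0) (wco 0) = (0:ℝ) := rfl
lemma ev_e0_w1 : Module.Dual.eval ℝ W7 (e0) (wco 1) = (0:ℝ) := rfl
lemma ev_e0_w2 : Module.Dual.eval ℝ W7 (e0) (wco 2) = (0:ℝ) := rfl
lemma ev_eV0_vz : Module.Dual.eval ℝ W7 (eV 0) (v0) = (0:ℝ) := rfl
lemma ev_eV0_v0 : Module.Dual.eval ℝ W7 (eV 0) (vco 0) = (1:ℝ) := rfl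
lemma ev_eV0_v1 : Module.Dual.eval ℝ W7 (eV 0) (vco 1) = (0:ℝ) := rfl
lemma ev_eV0_v2 : Module.Dual.eval ℝ W7 (eV 0) (vco 2) = (0:ℝ) := rfl
lemma ev_eV0_w0 : Module.Dual.eval ℝ W7 (eV 0) (wco 0) = (0:ℝ) := rfl
lemma ev_eV0_w1 : Module.Dual.eval ℝ W7 (eV 0) (wco 1) = (0:ℝ) := rfl
lemma ev_eV0_w2 : Module.Dual.eval ℝ W7 (eV 0) (wco 2) = (0:ℝ) := rfl
lemma ev_eV1_vz : Module.Dual.eval ℝ W7 (eV 1) (v0) = (0:ℝ) := rfl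
lemma ev_eV1_v0 : Module.Dual.eval ℝ W7 (eV 1) (vco 0) = (0:ℝ) := rfl
lemma ev_eV1_v1 : Module.Dual.eval ℝ W7 (eV 1) (vco 1) = (1:ℝ) := rfl
lemma ev_eV1_v2 : Module.Dual.eval ℝ W7 (eV 1) (vco 2) = (0:ℝ) := rfl
lemma ev_eV1_w0 : Module.Dual.eval ℝ W7 (eV 1) (wco 0) = (0:ℝ) := rfl
lemma ev_eV1_w1 : Module.Dual.eval ℝ W7 (eV 1) (wco 1) = (0:ℝ) := rfl
lemma ev_eV1_w2 : Module.Dual.eval ℝ W7 (eV 1) (wco 2) = (0:ℝ) := rfl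
lemma ev_eV2_vz : Module.Dual.eval ℝ W7 (eV 2) (v0) = (0:ℝ) := rfl
lemma ev_eV2_v0 : Module.Dual.eval ℝ W7 (eV 2) (vco 0) = (0:ℝ) := rfl
lemma ev_eV2_v1 : Module.Dual.eval ℝ W7 (eV 2) (vco 1) = (0:ℝ) := rfl
lemma ev_eV2_v2 : Module.Dual.eval ℝ W7 (eV 2) (vco 2) = (1:ℝ) := rfl
lemma ev_eV2_w0 : Module.Dual.eval ℝ W7 (eV 2) (wco 0) = (0:ℝ) := rfl
lemma ev_eV2_w1 : Module.Dual.eval ℝ W7 (eV 2) (wco 1) = (0:ℝ) := rfl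
lemma ev_eV2_w2 : Module.Dual.eval ℝ W7 (eV 2) (wco 2) = (0:ℝ) := rfl
lemma ev_eW0_vz : Module.Dual.eval ℝ W7 (eW 0) (v0) = (0:ℝ) := rfl
lemma ev_eW0_v0 : Module.Dual.eval ℝ W7 (eW 0) (vco 0) = (0:ℝ) := rfl
lemma ev_eW0_v1 : Module.Dual.eval ℝ W7 (eW 0) (vco 1) = (0:ℝ) := rfl
lemma ev_eW0_v2 : Module.Dual.eval ℝ W7 (eW 0) (vco 2) = (0:ℝ) := rfl
lemma ev_eW0_w0 : Module.Dual.eval ℝ W7 (eW 0) (wco 0) = (1:ℝ) := rfl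
lemma ev_eW0_w1 : Module.Dual.eval ℝ W7 (eW 0) (wco 1) = (0:ℝ) := rfl
lemma ev_eW0_w2 : Module.Dual.eval ℝ W7 (eW 0) (wco 2) = (0:ℝ) := rfl
lemma ev_eW1_vz : Module.Dual.eval ℝ W7 (eW 1) (v0) = (0:ℝ) := rfl
lemma ev_eW1_v0 : Module.Dual.eval ℝ W7 (eW 1) (vco 0) = (0:ℝ) := rfl
lemma ev_eW1_v1 : Module.Dual.eval ℝ W7 (eW 1) (vco 1) = (0:ℝ) := rfl
lemma ev_eW1_v2 : Module.Dual.eval ℝ W7 (eW 1) (vco 2) = (0:ℝ) := rfl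
lemma ev_eW1_w0 : Module.Dual.eval ℝ W7 (eW 1) (wco 0) = (0:ℝ) := rfl
lemma ev_eW1_w1 : Module.Dual.eval ℝ W7 (eW 1) (wco 1) = (1:ℝ) := rfl
lemma ev_eW1_w2 : Module.Dual.eval ℝ W7 (eW 1) (wco 2) = (0:ℝ) := rfl
lemma ev_eW2_vz : Module.Dual.eval ℝ W7 (eW 2) (v0) = (0:ℝ) := rfl
lemma ev_eW2_v0 : Module.Dual.eval ℝ W7 (eW 2) (vco 0) = (0:ℝ) := rfl
lemma ev_eW2_v1 : Module.Dual.eval ℝ W7 (eW 2) (vco 1) = (0:ℝ) := rfl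
lemma ev_eW2_v2 : Module.Dual.eval ℝ W7 (eW 2) (vco 2) = (0:ℝ) := rfl
lemma ev_eW2_w0 : Module.Dual.eval ℝ W7 (eW 2) (wco 0) = (0:ℝ) := rfl
lemma ev_eW2_w1 : Module.Dual.eval ℝ W7 (eW 2) (wco 1) = (0:ℝ) := rfl
lemma ev_eW2_w2 : Module.Dual.eval ℝ W7 (eW 2) (wco 2) = (1:ℝ) := rfl

set_option maxHeartbeats 1000000 in
set_option synthInstance.maxHeartbeats 400000 in
lemma hOm : Om ≠ 0 := by
  intro h
  have key : CliffordAlgebra.contractLeft (R := ℝ) (Module.Dual.eval ℝ W7 (eW 2))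
      (CliffordAlgebra.contractLeft (Module.Dual.eval ℝ W7 (eV 2))
      (CliffordAlgebra.contractLeft (Module.Dual.eval ℝ W7 (eW 1))
      (CliffordAlgebra.contractLeft (Module.Dual.eval ℝ W7 (eV 1))
      (CliffordAlgebra.contractLeft (Module.Dual.eval ℝ W7 (eW 0))
      (CliffordAlgebra.contractLeft (Module.Dual.eval ℝ W7 (eV 0))
      (CliffordAlgebra.contractLeft (Module.Dual.eval ℝ W7 e0) Om)))))) = (1 : EA) := by
    simp only [Om, CliffordAlgebra.contractLeft_ι_mul, CliffordAlgebra.contractLeft_ι,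
      ev_e0_vz, ev_e0_v0, ev_e0_v1, ev_e0_v2, ev_e0_w0, ev_e0_w1, ev_e0_w2, ev_eV0_vz, ev_eV0_v0, ev_eV0_v1, ev_eV0_v2, ev_eV0_w0, ev_eV0_w1, ev_eV0_w2, ev_eV1_vz, ev_eV1_v0, ev_eV1_v1, ev_eV1_v2, ev_eV1_w0, ev_eV1_w1, ev_eV1_w2, ev_eV2_vz, ev_eV2_v0, ev_eV2_v1, ev_eV2_v2, ev_eV2_w0, ev_eV2_w1, ev_eV2_w2, ev_eW0_vz, ev_eW0_v0, ev_eW0_v1, ev_eW0_v2, ev_eW0_w0, ev_eW0_w1, ev_eW0_w2, ev_eW1_vz, ev_eW1_v0, ev_eW1_v1, ev_eW1_v2, ev_eW1_w0, ev_eW1_w1, ev_eW1_w2, ev_eW2_vz, ev_eW2_v0, ev_eW2_v1, ev_eW2_v2, ev_eW2_w0, ev_eW2_w1, ev_eW2_w2, map_sub, map_smul, map_zero, map_one,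
      one_smul, zero_smul, smul_zero, sub_zero, zero_sub, neg_zero, mul_zero, zero_mul,
      mul_neg, neg_mul, neg_neg, add_zero, zero_add, mul_one, one_mul, smul_smul, smul_neg,
      Algebra.algebraMap_eq_smul_one]
  rw [h] at key
  simp only [map_zero] at key
  exact one_ne_zero key.symm

end Stmt1Aux

open Stmt1Aux in
/-- for every nonzero `u ∈ W`, the 2-form `ι(u)φ₀` has rank 6, i.e.
`(ι(u)φ₀)^3 ≠ 0` in `Λ^6 W*`. -/
theorem stmt_1 (u : W7) (hu : u ≠ 0) :
    intProd u phi0 * intProd u phi0 * intProd u phi0 ≠ 0 := by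
  intro h
  have hpos := hq u hu
  have h4 := hbeta4 u
  rw [h, zero_mul] at h4
  have hc : (0:ℝ) < 6 * (u.1^2 + u.2.1 0^2 + u.2.1 1^2 + u.2.1 2^2
      + u.2.2 0^2 + u.2.2 1^2 + u.2.2 2^2)^2 := by nlinarith [hpos]
  have hO : Om = 0 := by
    have h5 := congrArg (fun z : EA => (6 * (u.1^2 + u.2.1 0^2 + u.2.1 1^2 + u.2.1 2^2
      + u.2.2 0^2 + u.2.2 1^2 + u.2.2 2^2)^2)⁻¹ • z) h4
    simp only [smul_zero, smul_smul, inv_mul_cancel₀ hc.ne', one_smul] at h5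
    exact h5.symm
  exact hOm hO

end
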